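/- arXiv:1403.7272 — 2 statements merged into one kernel-verified Lean document; each statement's English description precedes it below -/
import Mathlib

section
/- Let k, ℓ be integers with 0 ≤ k ≤ ℓ ≤ 2k−1, let H=(V,F) be a (k,ℓ)-tight graph with |V| ≥ 2, and let x, y ∈ V be two distinct vertices of H. Then H has an orientation such that the in-degree of x is 0, the in-degree of y is 2k−ℓ, and the in-degree of every vertex z ∈ V∖{x,y} is k. -/
/-!
Give every vertex `v` as many slots as its prescribed in-degree `m v` (`0` at `x`, `2k - ℓ` at
`y`, `k` elsewhere). For a set `S` of edges, sparsity gives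
`|S| ≤ max (k |V(S)| - ℓ) 0 ≤ ∑_{v ∈ V(S)} m v`, which is Hall's condition for assigning to the
edges distinct slots at one of their endpoints; orienting every edge towards its slot gives
`ρ ≤ m`. Tightness makes `∑ m = |F| = ∑ ρ`, so `ρ = m` everywhere.
-/

/-!
Common set-up: a finite simple undirected graph on vertex type `V` is given by a
finset `F` of undirected edges (`Sym2 V`), all non-loops.  An orientation is a map
`o : Sym2 V → V × V` with `Sym2.mk (o e) = e` for every `e ∈ F`.
-/

variable {V : Type*}

/-- The set of vertices incident to at least one edge of `F'`. -/
def edgeSupp [Fintype V] [DecidableEq V] (F' : Finset (Sym2 V)) : Finset V :=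
  Finset.univ.filter (fun v => ∃ e ∈ F', v ∈ e)

/-- `(k,ℓ)`-sparsity: every edge subset `F'` satisfies `|F'| ≤ max (k|V(F')| - ℓ) 0`. -/
def Sparse [Fintype V] [DecidableEq V] (k l : ℤ) (F : Finset (Sym2 V)) : Prop :=
  ∀ F' ⊆ F, (F'.card : ℤ) ≤ max (k * (edgeSupp F').card - l) 0

/-- `(k,ℓ)`-tightness: `(k,ℓ)`-sparse and `|F| = max (k|V| - ℓ) 0`. -/
def Tight [Fintype V] [DecidableEq V] (k l : ℤ) (F : Finset (Sym2 V)) : Prop :=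
  Sparse k l F ∧ (F.card : ℤ) = max (k * (Fintype.card V) - l) 0

/-- In-degree of `v` under the orientation `o` of the edge set `F`. -/
def inDeg [DecidableEq V] (F : Finset (Sym2 V)) (o : Sym2 V → V × V) (v : V) : ℕ :=
  (F.filter (fun e => (o e).2 = v)).card

/-- `F(X)`: the edges of `F` joining two vertices of `X`. -/
def edgesWithin [Fintype V] [DecidableEq V] (F : Finset (Sym2 V)) (X : Finset V) :
    Finset (Sym2 V) :=
  F.filter (fun e => ∀ v : V, v ∈ e → v ∈ X)

/-- The (undirected) edges of `F` whose directed version under `o` enters `X`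
from `V \ X`, i.e. those `e ∈ F` with `(o e).1 ∉ X` and `(o e).2 ∈ X`. -/
def entering [DecidableEq V] (F : Finset (Sym2 V)) (o : Sym2 V → V × V) (X : Finset V) :
    Finset (Sym2 V) :=
  F.filter (fun e => (o e).1 ∉ X ∧ (o e).2 ∈ X)

open Finset

section Orientation

variable [DecidableEq V]

theorem sum_inDeg [Fintype V] (F : Finset (Sym2 V)) (o : Sym2 V → V × V) :
    ∑ v, inDeg F o v = #F :=
  (card_eq_sum_card_fiberwise fun e _ => mem_univ (o e).2).symm

theorem card_filter_sigma_fst_mem [Fintype V] (m : V → ℕ) (X : Finset V) :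
    #{s : Σ v, Fin (m v) | s.1 ∈ X} = ∑ v ∈ X, m v := by
  have : ({s : Σ v, Fin (m v) | s.1 ∈ X} : Finset _) = X.sigma fun _ => univ := by
    ext; simp
  simp [this]

theorem exists_injective_slot [Fintype V] (F : Finset (Sym2 V)) (m : V → ℕ)
    (hm : ∀ S ⊆ F, #S ≤ ∑ v ∈ edgeSupp S, m v) :
    ∃ f : {e // e ∈ F} → Σ v, Fin (m v), Function.Injective f ∧ ∀ e, (f e).1 ∈ e.1 := by
  refine (Fintype.all_card_le_filter_rel_iff_exists_injective
    fun (e : {e // e ∈ F}) (s : Σ v, Fin (m v)) => s.1 ∈ e.1).1 fun A => ?_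
  have hslots : ({s | ∃ e ∈ A, s.1 ∈ e.1} : Finset (Σ v, Fin (m v))) =
      ({s | s.1 ∈ edgeSupp (A.map (Function.Embedding.subtype _))} : Finset _) := by
    ext; simp [edgeSupp]
  rw [hslots, card_filter_sigma_fst_mem, ← card_map (Function.Embedding.subtype _)]
  exact hm _ fun e he => by obtain ⟨e', -, rfl⟩ := mem_map.1 he; exact e'.2

theorem exists_orientation_of_head (F : Finset (Sym2 V)) (head : {e // e ∈ F} → V)
    (hhead : ∀ e, head e ∈ e.1) :
    ∃ o : Sym2 V → V × V,
      ∀ e (he : e ∈ F), Sym2.mk (o e).1 (o e).2 = e ∧ (o e).2 = head ⟨e, he⟩ := by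
  have : ∀ e : Sym2 V, ∃ p : V × V, ∀ he : e ∈ F, Sym2.mk p.1 p.2 = e ∧ p.2 = head ⟨e, he⟩ := by
    intro e
    by_cases he : e ∈ F
    · obtain ⟨w, hw⟩ : ∃ w, e = s(head ⟨e, he⟩, w) := Sym2.mem_iff_exists.1 (hhead ⟨e, he⟩)
      exact ⟨(w, head ⟨e, he⟩), fun _ => ⟨Sym2.eq_swap.trans hw.symm, rfl⟩⟩
    · exact ⟨e.out, fun h => absurd h he⟩
  choose o ho using this
  exact ⟨o, ho⟩

theorem exists_orientation_inDeg_le [Fintype V] (F : Finset (Sym2 V)) (m : V → ℕ)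
    (hm : ∀ S ⊆ F, #S ≤ ∑ v ∈ edgeSupp S, m v) :
    ∃ o : Sym2 V → V × V, (∀ e ∈ F, Sym2.mk (o e).1 (o e).2 = e) ∧ ∀ v, inDeg F o v ≤ m v := by
  obtain ⟨f, hf, hfe⟩ := exists_injective_slot F m hm
  obtain ⟨o, ho⟩ := exists_orientation_of_head F (fun e => (f e).1) hfe
  refine ⟨o, fun e he => (ho e he).1, fun v => ?_⟩
  calc inDeg F o v = #(F.attach.filter fun e : F => (o e).2 = v) := by
        rw [filter_attach (fun e => (o e).2 = v), card_map, card_attach, inDeg]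
    _ = #(F.attach.filter fun e : F => (f e).1 = v) := by
        congr 1; exact filter_congr fun e _ => by rw [(ho e e.2).2]
    _ ≤ #{s : Σ v, Fin (m v) | s.1 ∈ ({v} : Finset V)} :=
        card_le_card_of_injOn f (fun e he => by simp_all) hf.injOn
    _ = m v := by rw [card_filter_sigma_fst_mem, sum_singleton]

theorem exists_orientation_inDeg_eq [Fintype V] (F : Finset (Sym2 V)) (m : V → ℕ)
    (hm : ∀ S ⊆ F, #S ≤ ∑ v ∈ edgeSupp S, m v) (hsum : ∑ v, m v = #F) :
    ∃ o : Sym2 V → V × V, (∀ e ∈ F, Sym2.mk (o e).1 (o e).2 = e) ∧ ∀ v, inDeg F o v = m v := by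
  obtain ⟨o, ho, hle⟩ := exists_orientation_inDeg_le F m hm
  have hsum' : ∑ v, inDeg F o v = ∑ v, m v := by rw [sum_inDeg, hsum]
  exact ⟨o, ho, fun v => (sum_eq_sum_iff_of_le fun v _ => hle v).1 hsum' v (mem_univ v)⟩

theorem Sparse.card_le_sum_edgeSupp [Fintype V] {k l : ℤ} {F : Finset (Sym2 V)}
    (hF : Sparse k l F) (m : V → ℕ) (hm : ∀ s : Finset V, k * #s - l ≤ ∑ v ∈ s, (m v : ℤ))
    (S : Finset (Sym2 V)) (hS : S ⊆ F) : #S ≤ ∑ v ∈ edgeSupp S, m v := by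
  have h := (hF S hS).trans (max_le (hm (edgeSupp S)) (by positivity))
  exact_mod_cast h

end Orientation

section TargetInDeg

variable [DecidableEq V]

def targetInDeg (k l : ℤ) (x y v : V) : ℕ :=
  if v = x then 0 else if v = y then (2 * k - l).toNat else k.toNat

variable {k l : ℤ} {x y : V}

theorem cast_targetInDeg (hxy : x ≠ y) (hk : 0 ≤ k) (hl : l ≤ 2 * k) (v : V) :
    (targetInDeg k l x y v : ℤ) =
      k - (if v = x then k else 0) - (if v = y then l - k else 0) := by
  unfold targetInDeg
  by_cases hvx : v = x
  · subst hvx; simp [hxy]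
  · by_cases hvy : v = y
    · subst hvy; simp [hvx, Int.toNat_of_nonneg (sub_nonneg.2 hl)]; ring
    · simp [hvx, hvy, Int.toNat_of_nonneg hk]

theorem sum_targetInDeg (hxy : x ≠ y) (hk : 0 ≤ k) (hl : l ≤ 2 * k) (s : Finset V) :
    ∑ v ∈ s, (targetInDeg k l x y v : ℤ) =
      k * #s - (if x ∈ s then k else 0) - (if y ∈ s then l - k else 0) := by
  simp only [cast_targetInDeg hxy hk hl, sum_sub_distrib, sum_const, sum_ite_eq', nsmul_eq_mul]
  ring

theorem le_sum_targetInDeg (hxy : x ≠ y) (hk : 0 ≤ k) (hkl : k ≤ l) (hl : l ≤ 2 * k)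
    (s : Finset V) : k * #s - l ≤ ∑ v ∈ s, (targetInDeg k l x y v : ℤ) := by
  rw [sum_targetInDeg hxy hk hl]
  split_ifs <;> linarith

theorem sum_targetInDeg_univ [Fintype V] (hxy : x ≠ y) (hk : 0 ≤ k) (hl : l ≤ 2 * k) :
    ∑ v, (targetInDeg k l x y v : ℤ) = k * Fintype.card V - l := by
  rw [sum_targetInDeg hxy hk hl, if_pos (mem_univ x), if_pos (mem_univ y), card_univ]
  ring

end TargetInDeg

theorem orientation_of_tight_of_ge_general {V : Type*} [Fintype V] [DecidableEq V]
    (k l : ℤ) (hk0 : 0 ≤ k) (hkl : k ≤ l) (hl2k : l ≤ 2 * k - 1)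
    (F : Finset (Sym2 V)) (hTight : Tight k l F)
    (x y : V) (hxy : x ≠ y) :
    ∃ o : Sym2 V → V × V, (∀ e ∈ F, Sym2.mk (o e).1 (o e).2 = e) ∧
      (inDeg F o x : ℤ) = 0 ∧ (inDeg F o y : ℤ) = 2 * k - l ∧
      ∀ z : V, z ≠ x → z ≠ y → (inDeg F o z : ℤ) = k := by
  have hl : l ≤ 2 * k := by omega
  have hsum : ∑ v, targetInDeg k l x y v = #F := by
    have h := sum_targetInDeg_univ hxy hk0 hl
    have hnonneg : 0 ≤ k * Fintype.card V - l := h ▸ by positivity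
    have hcard : (#F : ℤ) = k * Fintype.card V - l := by rw [hTight.2, max_eq_left hnonneg]
    exact_mod_cast h.trans hcard.symm
  obtain ⟨o, ho, hdeg⟩ := exists_orientation_inDeg_eq F (targetInDeg k l x y)
    (hTight.1.card_le_sum_edgeSupp _ (le_sum_targetInDeg hxy hk0 hkl hl)) hsum
  refine ⟨o, ho, ?_, ?_, fun z hzx hzy => ?_⟩ <;> rw [hdeg, cast_targetInDeg hxy hk0 hl]
  · simp [hxy]
  · simp [Ne.symm hxy]; ring
  · simp [hzx, hzy]

/-- If `0 ≤ k ≤ ℓ ≤ 2k - 1` and `H = (V, F)` is `(k,ℓ)`-tight with `|V| ≥ 2`, then for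
any distinct vertices `x, y` there is an orientation with `ρ(x) = 0`, `ρ(y) = 2k - ℓ`,
and `ρ(z) = k` for all other `z`. -/
theorem orientation_of_tight_of_ge {V : Type*} [Fintype V] [DecidableEq V]
    (k l : ℤ) (hk0 : 0 ≤ k) (hkl : k ≤ l) (hl2k : l ≤ 2 * k - 1)
    (F : Finset (Sym2 V)) (hSimple : ∀ e ∈ F, ¬ e.IsDiag) (hTight : Tight k l F)
    (hV : 2 ≤ Fintype.card V) (x y : V) (hxy : x ≠ y) :
    ∃ o : Sym2 V → V × V, (∀ e ∈ F, Sym2.mk (o e).1 (o e).2 = e) ∧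
      (inDeg F o x : ℤ) = 0 ∧ (inDeg F o y : ℤ) = 2 * k - l ∧
      ∀ z : V, z ≠ x → z ≠ y → (inDeg F o z : ℤ) = k :=
  orientation_of_tight_of_ge_general k l hk0 hkl hl2k F hTight x y hxy
end

section
/- Let k, ℓ be integers with 0 ≤ ℓ ≤ k, let H=(V,F) be a (k,ℓ)-tight graph with |V| ≥ 2, and let x ∈ V. Set m(x) = k−ℓ and m(z) = k for all z ∈ V∖{x}. Then Σ_{v∈V} m(v) = |F|, and for every X ⊆ V, |F(X)| ≤ Σ_{v∈X} m(v), where F(X) denotes the set of edges of F joining two vertices of X. -/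
/-!
Common set-up: a finite simple undirected graph on vertex type `V` is given by a
finset `F` of undirected edges (`Sym2 V`), all non-loops.  An orientation is a map
`o : Sym2 V → V × V` with `Sym2.mk (o e) = e` for every `e ∈ F`.
-/

variable {V : Type*}

/-!
Write `m` for the weight `k - ℓ` at `x` and `k` elsewhere, so that `∑_{v ∈ X} m v` is
`k|X| - ℓ` when `x ∈ X` and `k|X|` otherwise. Since `0 ≤ ℓ ≤ k`, every weight is
nonnegative, so this sum dominates `max (k|X| - ℓ) 0`. On `X = V` the sum is `k|V| - ℓ ≥ 0`,
which is `|F|` by tightness; for arbitrary `X`, the edges `F(X)` span at most the vertices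
of `X`, so sparsity bounds `|F(X)|` by `max (k|X| - ℓ) 0`.
-/

open Finset

section Weights

variable {R : Type*} [DecidableEq V]

theorem sum_ite_eq_mul_card_sub [CommRing R] (k l : R) (x : V) (X : Finset V) :
    ∑ v ∈ X, (if v = x then k - l else k) = k * #X - if x ∈ X then l else 0 := by
  have hsplit : ∀ v : V, (if v = x then k - l else k) = k - if v = x then l else 0 := by
    intro v; split_ifs <;> ring
  simp only [hsplit, sum_sub_distrib, sum_ite_eq', sum_const, nsmul_eq_mul]
  ring

variable [CommRing R] [LinearOrder R] [IsStrictOrderedRing R]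

theorem sum_ite_nonneg {k l : R} (hl0 : 0 ≤ l) (hlk : l ≤ k) (x : V) (X : Finset V) :
    0 ≤ ∑ v ∈ X, (if v = x then k - l else k) :=
  sum_nonneg fun v _ => by split_ifs <;> linarith

theorem max_mul_card_sub_le_sum_ite {k l : R} (hl0 : 0 ≤ l) (hlk : l ≤ k) (x : V)
    (X : Finset V) : max (k * #X - l) 0 ≤ ∑ v ∈ X, (if v = x then k - l else k) := by
  refine max_le ?_ (sum_ite_nonneg hl0 hlk x X)
  rw [sum_ite_eq_mul_card_sub]
  split_ifs <;> linarith

end Weights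

section Sparsity

variable [Fintype V] [DecidableEq V]

theorem edgeSupp_edgesWithin_subset (F : Finset (Sym2 V)) (X : Finset V) :
    edgeSupp (edgesWithin F X) ⊆ X := by
  intro v hv
  obtain ⟨-, e, he, hve⟩ := mem_filter.1 hv
  exact (mem_filter.1 he).2 v hve

theorem Sparse.card_edgesWithin_le {k l : ℤ} {F : Finset (Sym2 V)} (hF : Sparse k l F)
    (hk : 0 ≤ k) (X : Finset V) : ((edgesWithin F X).card : ℤ) ≤ max (k * #X - l) 0 := by
  have hsupp : ((edgeSupp (edgesWithin F X)).card : ℤ) ≤ #X := by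
    exact_mod_cast card_le_card (edgeSupp_edgesWithin_subset F X)
  calc ((edgesWithin F X).card : ℤ)
      ≤ max (k * (edgeSupp (edgesWithin F X)).card - l) 0 := hF _ (filter_subset _ _)
    _ ≤ max (k * #X - l) 0 := by gcongr

end Sparsity

theorem hakimi_condition_of_le_general {V : Type*} [Fintype V] [DecidableEq V]
    (k l : ℤ) (hl0 : 0 ≤ l) (hlk : l ≤ k)
    (F : Finset (Sym2 V)) (hTight : Tight k l F)
    (x : V) :
    (∑ v : V, (if v = x then k - l else k)) = (F.card : ℤ) ∧
      ∀ X : Finset V,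
        ((edgesWithin F X).card : ℤ) ≤ ∑ v ∈ X, (if v = x then k - l else k) := by
  refine ⟨?_, fun X => (hTight.1.card_edgesWithin_le (hl0.trans hlk) X).trans
    (max_mul_card_sub_le_sum_ite hl0 hlk x X)⟩
  have htotal := sum_ite_eq_mul_card_sub k l x univ
  rw [if_pos (mem_univ x), card_univ] at htotal
  rw [hTight.2, ← htotal, max_eq_left (sum_ite_nonneg hl0 hlk x univ)]

/-- Feasibility of Step 2 of Protocol A: for `0 ≤ ℓ ≤ k`, a `(k,ℓ)`-tight graph with
`|V| ≥ 2`, and `m(x) = k - ℓ`, `m(z) = k` for `z ≠ x`, Hakimi's condition holds: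
`∑ v, m v = |F|` and `|F(X)| ≤ ∑ v ∈ X, m v` for every `X ⊆ V`. -/
theorem hakimi_condition_of_le {V : Type*} [Fintype V] [DecidableEq V]
    (k l : ℤ) (hl0 : 0 ≤ l) (hlk : l ≤ k)
    (F : Finset (Sym2 V)) (hSimple : ∀ e ∈ F, ¬ e.IsDiag) (hTight : Tight k l F)
    (hV : 2 ≤ Fintype.card V) (x : V) :
    (∑ v : V, (if v = x then k - l else k)) = (F.card : ℤ) ∧
      ∀ X : Finset V,
        ((edgesWithin F X).card : ℤ) ≤ ∑ v ∈ X, (if v = x then k - l else k) :=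
  hakimi_condition_of_le_general k l hl0 hlk F hTight x
end
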